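/- Let K be a field of characteristic zero, m, n ≥ 1, a ∈ lie_m, d = (d_1, …, d_m) ∈ lie_m^m, a' ∈ lie_n, and d' = (d'_1, …, d'_n) ∈ lie_n^n. In the free Lie algebra L over K on generators x_0, x_1, …, x_{m+n}, set A := a(x_{n+1}, …, x_{m+n}) and D_j := d_j(x_{n+1}, …, x_{m+n}) (images under the Lie algebra homomorphism lie_m → L, x_k ↦ x_{n+k}), and set A' := a'(x_1, …, x_n) and D'_j := d'_j(x_1, …, x_n) (images under x_k ↦ x_k). Let U be the derivation of L with U(x_0) = [x_0, A], U(x_j) = [x_j, A] for 1 ≤ j ≤ n, and U(x_{n+j}) = [x_{n+j}, D_j] for 1 ≤ j ≤ m; let V be the derivation of L with V(x_0) = [x_0, A'], V(x_j) = [x_j, D'_j] for 1 ≤ j ≤ n, and V(x_{n+j}) = 0 for 1 ≤ j ≤ m. Then U and V commute: ⁅U, V⁆ = 0. (This is the compatibility making the monoid composition of the moperad of tangential derivations a Lie algebra homomorphism.) -/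
import Mathlib


open FreeLieAlgebra

variable (K : Type) [Field K] [CharZero K]

/-- The free Lie algebra over `K` on `N` generators. -/
abbrev lieF (N : ℕ) : Type := FreeLieAlgebra K (Fin N)

/-- The Lie algebra of derivations of `lieF K N`. -/
abbrev DerL (N : ℕ) : Type := LieDerivation K (lieF K N) (lieF K N)

/-- In the free Lie algebra `L` on `x_0, x_1, …, x_{m+n}` (indexed by `Fin (m+n+1)`, with
`x_r` indexed by `r`), the generator `x_r`, junk value `0` out of range. -/
noncomputable def xg (N k : ℕ) : lieF K N :=
  if h : k < N then FreeLieAlgebra.of K (⟨k, h⟩ : Fin N) else 0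

/-- The Lie algebra homomorphism `lie_m → L`, `x_k ↦ x_{n+k}`. -/
noncomputable def embHigh (m n : ℕ) : lieF K m →ₗ⁅K⁆ lieF K (m + n + 1) :=
  FreeLieAlgebra.lift K fun k : Fin m =>
    FreeLieAlgebra.of K (⟨n + 1 + (k : ℕ), by have := k.isLt; omega⟩ : Fin (m + n + 1))

/-- The Lie algebra homomorphism `lie_n → L`, `x_k ↦ x_k`. -/
noncomputable def embLow (m n : ℕ) : lieF K n →ₗ⁅K⁆ lieF K (m + n + 1) :=
  FreeLieAlgebra.lift K fun k : Fin n =>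
    FreeLieAlgebra.of K (⟨(k : ℕ) + 1, by have := k.isLt; omega⟩ : Fin (m + n + 1))

/-- The Lie span of the generators of a free Lie algebra is everything. -/
theorem lieSpan_range_of_eq_top (ι : Type) :
    LieSubalgebra.lieSpan K (FreeLieAlgebra K ι) (Set.range (FreeLieAlgebra.of K)) = ⊤ := by
  set S := LieSubalgebra.lieSpan K (FreeLieAlgebra K ι) (Set.range (FreeLieAlgebra.of K))
  have hmem : ∀ i : ι, FreeLieAlgebra.of K i ∈ S :=
    fun i => LieSubalgebra.subset_lieSpan ⟨i, rfl⟩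
  let g : FreeLieAlgebra K ι →ₗ⁅K⁆ S :=
    FreeLieAlgebra.lift K fun i => (⟨FreeLieAlgebra.of K i, hmem i⟩ : S)
  have hcomp : S.incl.comp g = LieHom.id := by
    apply FreeLieAlgebra.hom_ext
    intro x
    simp [g, FreeLieAlgebra.lift_of_apply]
  rw [eq_top_iff]
  intro x _
  have := congrArg (fun F : FreeLieAlgebra K ι →ₗ⁅K⁆ FreeLieAlgebra K ι => F x) hcomp
  simp only [LieHom.comp_apply, LieHom.id_apply] at this
  rw [← this]
  exact (g x).2

/-- If a derivation kills `f` of every generator, it kills `f` of everything. -/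
theorem der_vanish {ι : Type} {L : Type} [LieRing L] [LieAlgebra K L]
    (W : LieDerivation K L L) (f : FreeLieAlgebra K ι →ₗ⁅K⁆ L)
    (h : ∀ i, W (f (FreeLieAlgebra.of K i)) = 0) (b : FreeLieAlgebra K ι) : W (f b) = 0 := by
  let S : LieSubalgebra K (FreeLieAlgebra K ι) :=
    { carrier := {z | W (f z) = 0}
      add_mem' := fun {x y} hx hy => by simp_all [Set.mem_setOf_eq]
      zero_mem' := by simp
      smul_mem' := fun c {x} hx => by simp_all [Set.mem_setOf_eq]
      lie_mem' := fun {x y} hx hy => by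
        simp only [Set.mem_setOf_eq] at *
        rw [LieHom.map_lie, W.apply_lie_eq_add, hx, hy, zero_lie, lie_zero, add_zero] }
  have : (⊤ : LieSubalgebra K (FreeLieAlgebra K ι)) ≤ S := by
    rw [← lieSpan_range_of_eq_top K ι]
    exact LieSubalgebra.lieSpan_le.mpr (by rintro _ ⟨i, rfl⟩; exact h i)
  exact this (LieSubalgebra.mem_top b)

/-- If a derivation acts by `⁅·, A⁆` on `f` of every generator, it does so on `f` of
everything. -/
theorem der_tangential {ι : Type} {L : Type} [LieRing L] [LieAlgebra K L]
    (W : LieDerivation K L L) (f : FreeLieAlgebra K ι →ₗ⁅K⁆ L) (A : L)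
    (h : ∀ i, W (f (FreeLieAlgebra.of K i)) = ⁅f (FreeLieAlgebra.of K i), A⁆)
    (b : FreeLieAlgebra K ι) : W (f b) = ⁅f b, A⁆ := by
  have := der_vanish K (W - LieDerivation.inner K L L A) f (fun i => by
    simp [LieDerivation.sub_apply, LieDerivation.inner_apply_apply, h i]) b
  simp only [LieDerivation.sub_apply, LieDerivation.inner_apply_apply, sub_eq_zero] at this
  exact this

theorem jac_helper {L : Type} [LieRing L] (x A A' : L) :
    ⁅⁅x, A⁆, A'⁆ + ⁅x, ⁅A', A⁆⁆ - ⁅⁅x, A'⁆, A⁆ = 0 := by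
  have h := leibniz_lie A' x A
  rw [← lie_skew A' ⁅x, A⁆, ← lie_skew A' x, neg_lie] at h
  linear_combination (norm := abel) -h

/-- In the free Lie algebra `L` on `x_0, x_1, …, x_{m+n}`, set `A := a(x_{n+1},…,x_{m+n})`,
`D_j := d_j(x_{n+1},…,x_{m+n})`, `A' := a'(x_1,…,x_n)`, `D'_j := d'_j(x_1,…,x_n)`.
Let `U` be the derivation of `L` with `U(x_0) = [x_0, A]`, `U(x_j) = [x_j, A]` for
`1 ≤ j ≤ n`, `U(x_{n+j}) = [x_{n+j}, D_j]` for `1 ≤ j ≤ m`; and let `V` be the derivation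
with `V(x_0) = [x_0, A']`, `V(x_j) = [x_j, D'_j]` for `1 ≤ j ≤ n`, `V(x_{n+j}) = 0` for
`1 ≤ j ≤ m`.  Then `U` and `V` commute: `⁅U, V⁆ = 0`. -/
theorem monoid_composition_parts_commute (m n : ℕ) (hm : 1 ≤ m) (hn : 1 ≤ n)
    (a : lieF K m) (d : Fin m → lieF K m) (a' : lieF K n) (d' : Fin n → lieF K n)
    (U V : DerL K (m + n + 1))
    (hU0 : U (xg K (m + n + 1) 0) = ⁅xg K (m + n + 1) 0, embHigh K m n a⁆)
    (hU1 : ∀ j : Fin n,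
      U (xg K (m + n + 1) ((j : ℕ) + 1)) =
        ⁅xg K (m + n + 1) ((j : ℕ) + 1), embHigh K m n a⁆)
    (hU2 : ∀ j : Fin m,
      U (xg K (m + n + 1) (n + 1 + (j : ℕ))) =
        ⁅xg K (m + n + 1) (n + 1 + (j : ℕ)), embHigh K m n (d j)⁆)
    (hV0 : V (xg K (m + n + 1) 0) = ⁅xg K (m + n + 1) 0, embLow K m n a'⁆)
    (hV1 : ∀ j : Fin n,
      V (xg K (m + n + 1) ((j : ℕ) + 1)) =
        ⁅xg K (m + n + 1) ((j : ℕ) + 1), embLow K m n (d' j)⁆)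
    (hV2 : ∀ j : Fin m, V (xg K (m + n + 1) (n + 1 + (j : ℕ))) = 0) :
    ⁅U, V⁆ = 0 := by
  have hxg : ∀ (k : ℕ) (h : k < m + n + 1),
      xg K (m + n + 1) k = FreeLieAlgebra.of K (⟨k, h⟩ : Fin (m + n + 1)) :=
    fun k h => dif_pos h
  -- V kills everything in the image of embHigh
  have hVH : ∀ b : lieF K m, V (embHigh K m n b) = 0 := by
    refine der_vanish K V (embHigh K m n) (fun j => ?_)
    have := hV2 j
    rw [hxg (n + 1 + (j : ℕ)) (by have := j.isLt; omega)] at this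
    simpa [embHigh, FreeLieAlgebra.lift_of_apply] using this
  -- U acts by ⁅·, A⁆ on the image of embLow
  have hUL : ∀ b : lieF K n,
      U (embLow K m n b) = ⁅embLow K m n b, embHigh K m n a⁆ := by
    refine der_tangential K U (embLow K m n) (embHigh K m n a) (fun j => ?_)
    have := hU1 j
    rw [hxg ((j : ℕ) + 1) (by have := j.isLt; omega)] at this
    simpa [embLow, FreeLieAlgebra.lift_of_apply] using this
  apply LieDerivation.ext_of_lieSpan_eq_top _ (lieSpan_range_of_eq_top K (Fin (m + n + 1)))
  rintro _ ⟨⟨r, hr⟩, rfl⟩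
  simp only [LieDerivation.commutator_apply, LieDerivation.coe_zero, Pi.zero_apply]
  rcases Nat.lt_or_ge 0 r with h0 | h0
  · rcases Nat.lt_or_ge (r - 1) n with hcase | hcase
    · -- r = j + 1 for some j : Fin n
      set j : Fin n := ⟨r - 1, hcase⟩ with hj
      have hofr : FreeLieAlgebra.of K (⟨r, hr⟩ : Fin (m + n + 1)) =
          xg K (m + n + 1) ((j : ℕ) + 1) := by
        rw [hxg _ (by simp [hj]; omega)]
        congr 1
        simp [hj]
        omega
      rw [hofr, hU1 j, hV1 j,
        U.apply_lie_eq_add, V.apply_lie_eq_add, hU1 j, hV1 j,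
        hUL (d' j), hVH a, lie_zero]
      linear_combination (norm := abel)
        jac_helper (xg K (m + n + 1) ((j : ℕ) + 1)) (embHigh K m n a) (embLow K m n (d' j))
    · -- r = n + 1 + j for some j : Fin m
      set j : Fin m := ⟨r - (n + 1), by omega⟩ with hj
      have hofr : FreeLieAlgebra.of K (⟨r, hr⟩ : Fin (m + n + 1)) =
          xg K (m + n + 1) (n + 1 + (j : ℕ)) := by
        rw [hxg _ (by simp [hj]; omega)]
        congr 1
        simp [hj]
        omega
      rw [hofr, hV2 j, hU2 j, map_zero,
        V.apply_lie_eq_add, hV2 j, hVH (d j), zero_lie, lie_zero, add_zero]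
      simp
  · -- r = 0
    have hr0 : r = 0 := by omega
    subst hr0
    have hofr : FreeLieAlgebra.of K (⟨0, hr⟩ : Fin (m + n + 1)) = xg K (m + n + 1) 0 :=
      (hxg 0 hr).symm
    rw [hofr, hU0, hV0,
      U.apply_lie_eq_add, V.apply_lie_eq_add, hU0, hV0,
      hUL a', hVH a, lie_zero]
    linear_combination (norm := abel)
      jac_helper (xg K (m + n + 1) 0) (embHigh K m n a) (embLow K m n a')
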